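/- Let τ be a correct compositional translation from SYNCSIMPLE to LOCKSIMPLE_{k,IS} with k ≥ 2. Then the execution of τ(!) alone from the initial store IS blocks at an occurrence of some P_i, and the prefix up to the blocking point has the form R·P_i or R'·P_i·R·P_i where R contains no P_i or T_i; the same holds for τ(?). -/
import Mathlib


/-- Symbols of SYNCSIMPLE: `!` (bang) and `?` (ques). -/
inductive SSym | bang | ques
deriving DecidableEq

/-- A SYNCSIMPLE subprocess: a string over {!,?} ending with `0` (false) or `✓` (true). -/
abbrev SSub := List SSym × Bool

/-- A SYNCSIMPLE process: a multiset of subprocesses. -/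
abbrev SProc := Multiset SSub

/-- The SYS reduction: a leading `!` and a leading `?` of two subprocesses are consumed. -/
def SysStep (P Q : SProc) : Prop :=
  ∃ (u1 u2 : List SSym) (b1 b2 : Bool) (R : SProc),
    P = (SSym.bang :: u1, b1) ::ₘ (SSym.ques :: u2, b2) ::ₘ R ∧
    Q = (u1, b1) ::ₘ (u2, b2) ::ₘ R

/-- A process is successful if it contains the subprocess `✓`. -/
def SSuccessful (P : SProc) : Prop := (([], true) : SSub) ∈ P

def SMayConv (P : SProc) : Prop :=
  ∃ Q, Relation.ReflTransGen SysStep P Q ∧ SSuccessful Q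

def SMustConv (P : SProc) : Prop :=
  ∀ Q, Relation.ReflTransGen SysStep P Q → SMayConv Q

/-- Lock operations: put `P_i` and take `T_i`. -/
inductive LOp | put | take
deriving DecidableEq

abbrev LSym (k : ℕ) := LOp × Fin k
abbrev LSub (k : ℕ) := List (LSym k) × Bool
abbrev LProc (k : ℕ) := Multiset (LSub k)
/-- The store of `k` locks: `true` = full (■), `false` = empty (□). -/
abbrev Store (k : ℕ) := Fin k → Bool

/-- LOCKSIMPLE step: `P_i` fills an empty lock `i` (blocks if full);
    `T_i` empties lock `i` and never blocks. -/
def LockStep {k : ℕ} : (LProc k × Store k) → (LProc k × Store k) → Prop :=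
  fun s t => ∃ (i : Fin k) (u : List (LSym k)) (b : Bool) (R : LProc k),
    ((s.1 = ((LOp.put, i) :: u, b) ::ₘ R ∧ s.2 i = false ∧
      t.1 = (u, b) ::ₘ R ∧ t.2 = Function.update s.2 i true) ∨
     (s.1 = ((LOp.take, i) :: u, b) ::ₘ R ∧
      t.1 = (u, b) ::ₘ R ∧ t.2 = Function.update s.2 i false))

def LSuccessful {k : ℕ} (s : LProc k × Store k) : Prop := (([], true) : LSub k) ∈ s.1

def LMayConv {k : ℕ} (s : LProc k × Store k) : Prop :=
  ∃ t, Relation.ReflTransGen LockStep s t ∧ LSuccessful t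

def LMustConv {k : ℕ} (s : LProc k × Store k) : Prop :=
  ∀ t, Relation.ReflTransGen LockStep s t → LMayConv t

/-- The compositional translation determined by the strings `tb = τ(!)` and `tq = τ(?)`,
    applied to a subprocess. -/
def transSub {k : ℕ} (tb tq : List (LSym k)) (u : SSub) : LSub k :=
  (u.1.flatMap (fun c => match c with | SSym.bang => tb | SSym.ques => tq), u.2)

/-- The compositional translation applied to a process. -/
def transProc {k : ℕ} (tb tq : List (LSym k)) (P : SProc) : LProc k :=
  P.map (transSub tb tq)

/-- Correctness of the compositional translation `(tb, tq)` with initial store `IS`: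
    may- and must-convergence are preserved and reflected. -/
def Correct {k : ℕ} (IS : Store k) (tb tq : List (LSym k)) : Prop :=
  ∀ P : SProc,
    (SMayConv P ↔ LMayConv (transProc tb tq P, IS)) ∧
    (SMustConv P ↔ LMustConv (transProc tb tq P, IS))

/-- The solo execution of the string `s` from store `IS` reaches the point where
    `(put, i) :: rest` remains and deadlocks there since lock `i` is full. -/
def SoloBlocked {k : ℕ} (IS : Store k) (s : List (LSym k)) (i : Fin k)
    (rest : List (LSym k)) : Prop :=
  ∃ C : Store k,
    Relation.ReflTransGen LockStep (({(s, false)} : LProc k), IS)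
      (({((LOp.put, i) :: rest, false)} : LProc k), C) ∧
    C i = true

/-- Blocking type `P_i`: the blocking prefix is `R P_i` with `R` free of `P_i, T_i`. -/
def BlockingTypeP {k : ℕ} (IS : Store k) (s : List (LSym k)) (i : Fin k) : Prop :=
  ∃ r rest, s = r ++ (LOp.put, i) :: rest ∧ (∀ x ∈ r, x.2 ≠ i) ∧
    SoloBlocked IS s i rest

/-- Blocking type `P_i P_i`: the blocking prefix is `R₁ P_i R₂ P_i` with
    `R₂` free of `P_i, T_i`, deadlocking exactly before the last `P_i`. -/
def BlockingTypePP {k : ℕ} (IS : Store k) (s : List (LSym k)) (i : Fin k) : Prop :=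
  ∃ r1 r2 rest, s = r1 ++ (LOp.put, i) :: r2 ++ (LOp.put, i) :: rest ∧
    (∀ x ∈ r2, x.2 ≠ i) ∧ SoloBlocked IS s i rest

/-! ### Auxiliary machinery -/

/-- Deterministic solo execution of a string from a store: returns the final store
and the remaining (stuck or empty) string. -/
def solo {k : ℕ} : Store k → List (LSym k) → Store k × List (LSym k)
  | C, [] => (C, [])
  | C, (LOp.take, i) :: t => solo (Function.update C i false) t
  | C, (LOp.put, i) :: t =>
      if C i then (C, (LOp.put, i) :: t) else solo (Function.update C i true) t

lemma lockstep_take {k : ℕ} (C : Store k) (i : Fin k) (u : List (LSym k)) (b : Bool) :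
    LockStep (({((LOp.take, i) :: u, b)} : LProc k), C)
      (({(u, b)} : LProc k), Function.update C i false) := by
  exact ⟨i, u, b, 0, Or.inr ⟨rfl, rfl, rfl⟩⟩

lemma lockstep_put {k : ℕ} (C : Store k) (i : Fin k) (u : List (LSym k)) (b : Bool)
    (h : C i = false) :
    LockStep (({((LOp.put, i) :: u, b)} : LProc k), C)
      (({(u, b)} : LProc k), Function.update C i true) := by
  exact ⟨i, u, b, 0, Or.inl ⟨rfl, h, rfl, rfl⟩⟩

lemma solo_rtg {k : ℕ} : ∀ (s : List (LSym k)) (C : Store k) (b : Bool),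
    Relation.ReflTransGen LockStep (({(s, b)} : LProc k), C)
      (({((solo C s).2, b)} : LProc k), (solo C s).1)
  | [], C, b => by
      simp only [solo]
      exact Relation.ReflTransGen.refl
  | (LOp.take, i) :: t, C, b => by
      rw [show solo C ((LOp.take, i) :: t) = solo (Function.update C i false) t from rfl]
      exact Relation.ReflTransGen.head (lockstep_take C i t b) (solo_rtg t _ b)
  | (LOp.put, i) :: t, C, b => by
      by_cases h : C i
      · simp only [solo, h, if_true]
        exact Relation.ReflTransGen.refl
      · rw [show solo C ((LOp.put, i) :: t)
            = if C i then (C, (LOp.put, i) :: t) else solo (Function.update C i true) t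
            from rfl, if_neg h]
        exact Relation.ReflTransGen.head
          (lockstep_put C i t b (by simpa using h)) (solo_rtg t _ b)

/-- The solo run either finishes, or is stuck at a `put` on a full lock. -/
lemma solo_stuck {k : ℕ} : ∀ (s : List (LSym k)) (C : Store k),
    (solo C s).2 = [] ∨ ∃ i rest, (solo C s).2 = (LOp.put, i) :: rest ∧ (solo C s).1 i = true
  | [], C => Or.inl rfl
  | (LOp.take, i) :: t, C => solo_stuck t (Function.update C i false)
  | (LOp.put, i) :: t, C => by
      by_cases h : C i
      · exact Or.inr ⟨i, t, by simp [solo, h], by simp [solo, h]⟩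
      · rw [show solo C ((LOp.put, i) :: t)
            = if C i then (C, (LOp.put, i) :: t) else solo (Function.update C i true) t
            from rfl, if_neg h]
        exact solo_stuck t _

/-- Structure of the prefix up to the blocking point. -/
lemma solo_split {k : ℕ} : ∀ (s : List (LSym k)) (C : Store k) (i : Fin k)
    (rest : List (LSym k)), (solo C s).2 = (LOp.put, i) :: rest →
    ((∃ r, s = r ++ (LOp.put, i) :: rest ∧ (∀ x ∈ r, x.2 ≠ i) ∧ C i = true) ∨
     (∃ r1 r2, s = r1 ++ (LOp.put, i) :: r2 ++ (LOp.put, i) :: rest ∧ ∀ x ∈ r2, x.2 ≠ i))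
  | [], C, i, rest => by simp [solo]
  | (LOp.take, j) :: t, C, i, rest => by
      intro h
      rcases solo_split t (Function.update C j false) i rest h with ⟨r, hr, hfree, hCi⟩ | ⟨r1, r2, hr, hfree⟩
      · by_cases hji : j = i
        · subst hji
          rw [Function.update_self] at hCi
          exact absurd hCi (by simp)
        · exact Or.inl ⟨(LOp.take, j) :: r, by simp [hr], by
            rintro x hx
            rcases List.mem_cons.mp hx with rfl | hx
            · exact hji
            · exact hfree x hx, by rwa [Function.update_of_ne (Ne.symm hji)] at hCi⟩
      · exact Or.inr ⟨(LOp.take, j) :: r1, r2, by simp [hr], hfree⟩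
  | (LOp.put, j) :: t, C, i, rest => by
      intro h
      by_cases hC : C j
      · rw [show solo C ((LOp.put, j) :: t) = (C, (LOp.put, j) :: t) from by
            simp [solo, hC]] at h
        obtain ⟨h1, h2⟩ : (LOp.put, j) = ((LOp.put, i) : LSym k) ∧ t = rest := by
          simpa using h
        obtain rfl : j = i := by simpa using h1
        subst h2
        exact Or.inl ⟨[], rfl, by simp, hC⟩
      · rw [show solo C ((LOp.put, j) :: t)
            = if C j then (C, (LOp.put, j) :: t) else solo (Function.update C j true) t
            from rfl, if_neg hC] at h
        rcases solo_split t (Function.update C j true) i rest h with ⟨r, hr, hfree, hCi⟩ | ⟨r1, r2, hr, hfree⟩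
        · by_cases hji : j = i
          · subst hji
            exact Or.inr ⟨[], r, by simp [hr], hfree⟩
          · exact Or.inl ⟨(LOp.put, j) :: r, by simp [hr], by
              rintro x hx
              rcases List.mem_cons.mp hx with rfl | hx
              · exact hji
              · exact hfree x hx, by rwa [Function.update_of_ne (Ne.symm hji)] at hCi⟩
        · exact Or.inr ⟨(LOp.put, j) :: r1, r2, by simp [hr], hfree⟩

lemma no_sysstep_singleton (p : SSub) (Q : SProc) : ¬ SysStep {p} Q := by
  rintro ⟨u1, u2, b1, b2, R, hP, -⟩
  have := congrArg Multiset.card hP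
  simp at this

lemma not_smayconv (u : List SSym) (hu : u ≠ []) : ¬ SMayConv {(u, true)} := by
  rintro ⟨Q, hQ, hS⟩
  rcases hQ.cases_head with rfl | ⟨c, hc, -⟩
  · have : u = [] := by simpa [SSuccessful, eq_comm] using hS
    exact hu this
  · exact no_sysstep_singleton _ _ hc

lemma blocking_of_not_lmayconv {k : ℕ} (IS : Store k) (s : List (LSym k))
    (h : ¬ LMayConv (({(s, true)} : LProc k), IS)) :
    ∃ i : Fin k, BlockingTypeP IS s i ∨ BlockingTypePP IS s i := by
  rcases solo_stuck s IS with hnil | ⟨i, rest, hstuck, hfull⟩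
  · exfalso
    apply h
    refine ⟨(({([], true)} : LProc k), (solo IS s).1), ?_, ?_⟩
    · have := solo_rtg s IS true
      rwa [hnil] at this
    · simp [LSuccessful]
  · have hblock : SoloBlocked IS s i rest := by
      refine ⟨(solo IS s).1, ?_, hfull⟩
      have := solo_rtg s IS false
      rwa [hstuck] at this
    rcases solo_split s IS i rest hstuck with ⟨r, hr, hfree, -⟩ | ⟨r1, r2, hr, hfree⟩
    · exact ⟨i, Or.inl ⟨r, rest, hr, hfree, hblock⟩⟩
    · exact ⟨i, Or.inr ⟨r1, r2, rest, hr, hfree, hblock⟩⟩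

/-- for a correct compositional translation with `k ≥ 2` locks, the
solo execution of `τ(!)` from the initial store blocks at some `P_i`, with a
blocking prefix of the form `R·P_i` or `R'·P_i·R·P_i` where `R` mentions no
`P_i, T_i`; and likewise for `τ(?)`. -/
theorem blocking_prefix_exists :
    ∀ (k : ℕ), 2 ≤ k → ∀ (IS : Store k) (tb tq : List (LSym k)),
      Correct IS tb tq →
      (∃ i : Fin k, BlockingTypeP IS tb i ∨ BlockingTypePP IS tb i) ∧
      (∃ i : Fin k, BlockingTypeP IS tq i ∨ BlockingTypePP IS tq i) := by
  intro k _ IS tb tq hcorr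
  have htb : transProc tb tq ({([SSym.bang], true)} : SProc) = ({(tb, true)} : LProc k) := by
    simp [transProc, transSub]
  have htq : transProc tb tq ({([SSym.ques], true)} : SProc) = ({(tq, true)} : LProc k) := by
    simp [transProc, transSub]
  constructor
  · apply blocking_of_not_lmayconv
    intro hL
    exact not_smayconv [SSym.bang] (by simp)
      (((hcorr {([SSym.bang], true)}).1).mpr (htb ▸ hL))
  · apply blocking_of_not_lmayconv
    intro hL
    exact not_smayconv [SSym.ques] (by simp)
      (((hcorr {([SSym.ques], true)}).1).mpr (htq ▸ hL))
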